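/- Fix $c\in\mathbb{R}$ and $\varepsilon>0$, and let $v:\mathbb{R}\to\mathbb{R}^2$ be the unique bounded full solution of $\dot x=g_c(t,x)$. Then $v$ is weakly hyperbolic: the linearized equation $\dot w=\phi'(-t)\,Df^{+}_\varepsilon(v(t))\,w+\phi'(t)\,Df^{-}_c(v(t))\,w$ has no bounded full solution $w:\mathbb{R}\to\mathbb{R}^2$ other than $w\equiv 0$. -/

import Mathlib

/-- `f⁻_c(x₁,x₂) = (x₁, -x₂ + 3x₁² - c)` -/
def fminus (c : ℝ) : ℝ × ℝ → ℝ × ℝ := fun x => (x.1, -x.2 + 3 * x.1 ^ 2 - c)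

/-- `f⁺_ε(x₁,x₂) = (-x₁ + εx₂, x₂)` -/
def fplus (ε : ℝ) : ℝ × ℝ → ℝ × ℝ := fun x => (-x.1 + ε * x.2, x.2)

/-- `g_c(t,x) = φ'(-t) f⁺_ε(x) + φ'(t) f⁻_c(x)`, where `dφ = φ'`. -/
def gc (c ε : ℝ) (dφ : ℝ → ℝ) (t : ℝ) (x : ℝ × ℝ) : ℝ × ℝ :=
  dφ (-t) • fplus ε x + dφ t • fminus c x

/-- Jacobian of `f⁻_c` at `x`, applied to `w`:
`Df⁻_c(x) w = (w₁, 6x₁w₁ - w₂)`. -/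
def Dfminus (x w : ℝ × ℝ) : ℝ × ℝ := (w.1, 6 * x.1 * w.1 - w.2)

/-- Jacobian of `f⁺_ε`, applied to `w`: `Df⁺_ε w = (-w₁ + εw₂, w₂)`. -/
def Dfplus (ε : ℝ) (w : ℝ × ℝ) : ℝ × ℝ := (-w.1 + ε * w.2, w.2)

/-!
The switches `φ'(t)` and `φ'(-t)` have disjoint supports, so for `t ≥ 0` the linearization is
`ẇ = φ'(t) Df⁻_c(v(t)) w` and for `t ≤ 0` it is `ẇ = φ'(-t) Df⁺_ε w`: the two autonomous
linearizations run on the clocks `φ(t)` and `φ(-t)`, which grow like `|t|`. Both matrices are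
triangular with eigenvalues `±1`, and an eigen-coordinate `f` with `ḟ = a f` satisfies
`f(t) = f(s) e^{A(t) - A(s)}` for any `A' = a`. For `t ≥ 0` the coordinate `w₁` grows like
`e^{φ(t)}`, so boundedness forces `w₁ = 0` there. For `t ≤ 0` the coordinate `w₁ - (ε/2) w₂` grows
like `e^{φ(-t)}`, so it vanishes; with `w₁(0) = 0` and `ε ≠ 0` this gives `w₂(0) = 0`, and the
remaining scalar equations are linear with zero initial value.
-/

open Set Filter Topology Asymptotics Real

theorem HasDerivAt.eq_zero_of_eqOn_Iic {f : ℝ → ℝ} {f' x c : ℝ} (hf : HasDerivAt f f' x)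
    (hc : EqOn f (fun _ => c) (Iic x)) : f' = 0 :=
  (uniqueDiffWithinAt_Iic x).eq_deriv _ hf.hasDerivWithinAt
    ((hasDerivWithinAt_const x _ c).congr hc (hc self_mem_Iic))

theorem Convex.eq_mul_exp_sub_of_hasDerivAt {S : Set ℝ} (hS : Convex ℝ S) {f A a : ℝ → ℝ}
    (hA : ∀ u ∈ S, HasDerivAt A (a u) u) (hf : ∀ u ∈ S, HasDerivAt f (a u * f u) u)
    {s t : ℝ} (hs : s ∈ S) (ht : t ∈ S) : f t = f s * exp (A t - A s) := by
  have hderiv : ∀ u ∈ S, HasDerivWithinAt (fun u => f u * exp (-A u)) 0 S u := fun u hu =>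
    (((hf u hu).mul (hA u hu).neg.exp).congr_deriv (by ring)).hasDerivWithinAt
  have hconst := hS.norm_image_sub_le_of_norm_hasDerivWithin_le hderiv
    (fun _ _ => norm_zero.le) hs ht
  rw [zero_mul, norm_le_zero_iff, sub_eq_zero] at hconst
  calc f t = f t * exp (-A t) * exp (A t) := by
        rw [mul_assoc, ← exp_add, neg_add_cancel, exp_zero, mul_one]
    _ = f s * exp (A t - A s) := by
        rw [hconst, mul_assoc, ← exp_add, neg_add_eq_sub]

theorem Convex.eq_zero_of_hasDerivAt_of_eq_zero {S : Set ℝ} (hS : Convex ℝ S) {f A a : ℝ → ℝ}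
    (hA : ∀ u ∈ S, HasDerivAt A (a u) u) (hf : ∀ u ∈ S, HasDerivAt f (a u * f u) u)
    {s t : ℝ} (hs : s ∈ S) (ht : t ∈ S) (hs0 : f s = 0) : f t = 0 := by
  rw [hS.eq_mul_exp_sub_of_hasDerivAt hA hf hs ht, hs0, zero_mul]

theorem eq_zero_of_eventually_eq_mul_exp {l : Filter ℝ} [l.NeBot] {f A : ℝ → ℝ} {s : ℝ}
    (hA : Tendsto A l atTop) (hf : f =O[l] fun _ => (1 : ℝ))
    (h : ∀ᶠ t in l, f t = f s * exp (A t - A s)) : f s = 0 := by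
  have hdecay : Tendsto (fun t => exp (A s - A t)) l (𝓝 0) :=
    (tendsto_exp_neg_atTop_nhds_zero.comp (tendsto_atTop_add_const_right _ (-A s) hA)).congr
      fun t => by simp only [Function.comp_apply]; ring_nf
  have hlim : Tendsto (fun t => f t * exp (A s - A t)) l (𝓝 0) :=
    hdecay.zero_mul_isBoundedUnder_le ((isBigO_one_iff ℝ).1 hf) |>.congr fun t => mul_comm _ _
  refine tendsto_nhds_unique (tendsto_const_nhds.congr' ?_) hlim
  filter_upwards [h] with t ht
  rw [ht, mul_assoc, ← exp_add, sub_add_sub_cancel, sub_self, exp_zero, mul_one]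

theorem Convex.eqOn_zero_of_hasDerivAt_of_isBigO_one {S : Set ℝ} (hS : Convex ℝ S)
    {l : Filter ℝ} [l.NeBot] (hl : ∀ᶠ t in l, t ∈ S) {f A a : ℝ → ℝ}
    (hA : ∀ u ∈ S, HasDerivAt A (a u) u) (hf : ∀ u ∈ S, HasDerivAt f (a u * f u) u)
    (hAl : Tendsto A l atTop) (hfl : f =O[l] fun _ => (1 : ℝ)) : EqOn f 0 S := fun _ hs =>
  eq_zero_of_eventually_eq_mul_exp hAl hfl
    (hl.mono fun _ ht => hS.eq_mul_exp_sub_of_hasDerivAt hA hf hs ht)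

theorem isBigO_one_of_isBounded_range {α E : Type*} [SeminormedAddCommGroup E] {f : α → E}
    (hf : Bornology.IsBounded (range f)) (l : Filter α) : f =O[l] fun _ => (1 : ℝ) := by
  obtain ⟨M, hM⟩ := isBounded_iff_forall_norm_le.1 hf
  exact (isBigO_one_iff ℝ).2 (isBoundedUnder_of ⟨M, fun t => hM _ (mem_range_self t)⟩)

theorem HasDerivAt.fst {𝕜 E F : Type*} [NontriviallyNormedField 𝕜] [NormedAddCommGroup E]
    [NormedSpace 𝕜 E] [NormedAddCommGroup F] [NormedSpace 𝕜 F] {f : 𝕜 → E × F} {f' : E × F}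
    {x : 𝕜} (hf : HasDerivAt f f' x) : HasDerivAt (fun s => (f s).1) f'.1 x :=
  (hasFDerivAt_fst (p := f x)).comp_hasDerivAt x hf

theorem HasDerivAt.snd {𝕜 E F : Type*} [NontriviallyNormedField 𝕜] [NormedAddCommGroup E]
    [NormedSpace 𝕜 E] [NormedAddCommGroup F] [NormedSpace 𝕜 F] {f : 𝕜 → E × F} {f' : E × F}
    {x : 𝕜} (hf : HasDerivAt f f' x) : HasDerivAt (fun s => (f s).2) f'.2 x :=
  (hasFDerivAt_snd (p := f x)).comp_hasDerivAt x hf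

section Linearization

variable {ε r t : ℝ} {v w : ℝ → ℝ × ℝ}

theorem hasDerivAt_snd_of_Dfminus (hw : HasDerivAt w (r • Dfminus (v t) (w t)) t)
    (h : (w t).1 = 0) : HasDerivAt (fun s => (w s).2) (-r * (w t).2) t :=
  hw.snd.congr_deriv (by simp [Dfminus, h])

/-- `(1, -ε/2)` is a left eigenvector of `Df⁺_ε` for the eigenvalue `-1`. -/
theorem hasDerivAt_fst_sub_snd_of_Dfplus (hw : HasDerivAt w (r • Dfplus ε (w t)) t) :
    HasDerivAt (fun s => (w s).1 - ε / 2 * (w s).2) (-r * ((w t).1 - ε / 2 * (w t).2)) t :=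
  (hw.fst.sub (hw.snd.const_mul (ε / 2))).congr_deriv <| by
    simp only [Dfplus, Prod.smul_mk, smul_eq_mul]
    ring

variable {A a : ℝ → ℝ} {s : ℝ}

theorem eqOn_fst_zero_of_hasDerivAt_Dfminus (hA : ∀ u ∈ Ici s, HasDerivAt A (a u) u)
    (hAl : Tendsto A atTop atTop) (hw : ∀ u ∈ Ici s, HasDerivAt w (a u • Dfminus (v u) (w u)) u)
    (hwO : w =O[atTop] fun _ => (1 : ℝ)) : EqOn (fun t => (w t).1) 0 (Ici s) :=
  (convex_Ici s).eqOn_zero_of_hasDerivAt_of_isBigO_one (eventually_ge_atTop s) hA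
    (fun u hu => (hw u hu).fst) hAl (isBigO_fst_prod'.trans hwO)

theorem eqOn_zero_of_hasDerivAt_Dfminus (hA : ∀ u ∈ Ici s, HasDerivAt A (a u) u)
    (hAl : Tendsto A atTop atTop) (hw : ∀ u ∈ Ici s, HasDerivAt w (a u • Dfminus (v u) (w u)) u)
    (hwO : w =O[atTop] fun _ => (1 : ℝ)) (hy : (w s).2 = 0) : EqOn w 0 (Ici s) := fun t ht => by
  have hx := eqOn_fst_zero_of_hasDerivAt_Dfminus hA hAl hw hwO
  refine Prod.ext (hx ht) ?_
  exact (convex_Ici s).eq_zero_of_hasDerivAt_of_eq_zero (fun u hu => (hA u hu).neg)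
    (fun u hu => hasDerivAt_snd_of_Dfminus (hw u hu) (hx hu)) self_mem_Ici ht hy

theorem eqOn_zero_of_hasDerivAt_Dfplus (hε : ε ≠ 0) (hA : ∀ u ∈ Iic s, HasDerivAt A (-a u) u)
    (hAl : Tendsto A atBot atTop) (hw : ∀ u ∈ Iic s, HasDerivAt w (a u • Dfplus ε (w u)) u)
    (hwO : w =O[atBot] fun _ => (1 : ℝ)) (hx : (w s).1 = 0) : EqOn w 0 (Iic s) := fun t ht => by
  have hz : EqOn (fun t => (w t).1 - ε / 2 * (w t).2) 0 (Iic s) :=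
    (convex_Iic s).eqOn_zero_of_hasDerivAt_of_isBigO_one (eventually_le_atBot s) hA
      (fun u hu => hasDerivAt_fst_sub_snd_of_Dfplus (hw u hu)) hAl
      ((isBigO_fst_prod'.trans hwO).sub ((isBigO_snd_prod'.trans hwO).const_mul_left _))
  have hys : (w s).2 = 0 := by
    have hzs : (w s).1 - ε / 2 * (w s).2 = 0 := hz self_mem_Iic
    rw [hx, zero_sub, neg_eq_zero, mul_eq_zero] at hzs
    exact hzs.resolve_left (div_ne_zero hε two_ne_zero)
  have hy : (w t).2 = 0 :=
    (convex_Iic s).eq_zero_of_hasDerivAt_of_eq_zero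
      (fun u hu => (hA u hu).neg.congr_deriv (neg_neg _)) (fun u hu => (hw u hu).snd)
      self_mem_Iic ht hys
  have hzt : (w t).1 - ε / 2 * (w t).2 = 0 := hz ht
  rw [hy, mul_zero, sub_zero] at hzt
  exact Prod.ext hzt hy

end Linearization

theorem stmt13_general (ε : ℝ) (hε : 0 < ε) (φ dφ : ℝ → ℝ)
    (hφ : ∀ t : ℝ, HasDerivAt φ (dφ t) t)
    (hφ0 : ∀ t ≤ (0:ℝ), φ t = 0) (hφ1 : ∀ t ≥ (1:ℝ), φ t = t)
    (v : ℝ → ℝ × ℝ)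
    (w : ℝ → ℝ × ℝ)
    (hw : ∀ t : ℝ, HasDerivAt w
      (dφ (-t) • Dfplus ε (w t) + dφ t • Dfminus (v t) (w t)) t)
    (hwb : Bornology.IsBounded (Set.range w)) :
    ∀ t : ℝ, w t = 0 := by
  have hd0 : ∀ s ≤ 0, dφ s = 0 := fun s hs =>
    (hφ s).eq_zero_of_eqOn_Iic fun u hu => hφ0 u (le_trans hu hs)
  have hminus : ∀ t ∈ Ici (0 : ℝ), HasDerivAt w (dφ t • Dfminus (v t) (w t)) t := fun t ht => by
    simpa [hd0 (-t) (neg_nonpos.2 ht)] using hw t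
  have hplus : ∀ t ∈ Iic (0 : ℝ), HasDerivAt w (dφ (-t) • Dfplus ε (w t)) t := fun t ht => by
    simpa [hd0 t ht] using hw t
  have hφ_top : Tendsto φ atTop atTop :=
    tendsto_id.congr' ((eventually_ge_atTop 1).mono fun t ht => (hφ1 t ht).symm)
  have hφneg : ∀ t, HasDerivAt (fun s => φ (-s)) (-dφ (-t)) t := fun t => by
    simpa [Function.comp_def] using (hφ (-t)).comp t (hasDerivAt_neg t)
  have hwO := isBigO_one_of_isBounded_range hwb
  have hx0 : (w 0).1 = 0 :=
    eqOn_fst_zero_of_hasDerivAt_Dfminus (fun u _ => hφ u) hφ_top hminus (hwO atTop) self_mem_Ici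
  have h_bwd : EqOn w 0 (Iic 0) :=
    eqOn_zero_of_hasDerivAt_Dfplus hε.ne' (fun u _ => hφneg u)
      (hφ_top.comp tendsto_neg_atBot_atTop) hplus (hwO atBot) hx0
  have h_fwd : EqOn w 0 (Ici 0) :=
    eqOn_zero_of_hasDerivAt_Dfminus (fun u _ => hφ u) hφ_top hminus (hwO atTop)
      (congrArg Prod.snd (h_bwd self_mem_Iic))
  intro t
  rcases le_total 0 t with ht | ht
  exacts [h_fwd ht, h_bwd ht]

/-- The (unique) bounded full solution `v` of `ẋ = g_c(t,x)`
is weakly hyperbolic: the linearization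
`ẇ = φ'(-t) Df⁺_ε w + φ'(t) Df⁻_c(v(t)) w` has no bounded full solution
other than `w ≡ 0`. -/
theorem stmt13 (c ε : ℝ) (hε : 0 < ε) (φ dφ : ℝ → ℝ)
    (hφ : ∀ t : ℝ, HasDerivAt φ (dφ t) t) (hdc : Continuous dφ)
    (hφ0 : ∀ t ≤ (0:ℝ), φ t = 0) (hφ1 : ∀ t ≥ (1:ℝ), φ t = t)
    (hdpos : ∀ t : ℝ, 0 ≤ dφ t)
    (v : ℝ → ℝ × ℝ)
    (hv : ∀ t : ℝ, HasDerivAt v (gc c ε dφ t (v t)) t)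
    (hvb : Bornology.IsBounded (Set.range v))
    (w : ℝ → ℝ × ℝ)
    (hw : ∀ t : ℝ, HasDerivAt w
      (dφ (-t) • Dfplus ε (w t) + dφ t • Dfminus (v t) (w t)) t)
    (hwb : Bornology.IsBounded (Set.range w)) :
    ∀ t : ℝ, w t = 0 :=
  stmt13_general ε hε φ dφ hφ hφ0 hφ1 v w hw hwb
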